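/- There is no polynomial h ∈ ℝ[m,v] such that h(m,v)² = (3m² − 7mv − 2v²)² − 4(2m − 2v)(m³ + 3m²v + 2mv²); that is, the discriminant of f with respect to u is not the square of any real polynomial in m and v. Consequently f(m,u,v) admits no factorization of the form f = (a₁(m,v)u + b₁(m,v))(a₂(m,v)u + b₂(m,v))·c(m,v) with a₁, a₂, b₁, b₂, c ∈ ℝ[m,v]. -/

import Mathlib

/-!
At `(m, v) = (2, 1)` the polynomial `f` specializes to `2u² − 4u + 24`, and the discriminant
of `f` to the discriminant `−176` of this real quadratic. A square cannot take a negative value.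
A splitting of `f` into factors linear in `u` would specialize to one of `2u² − 4u + 24`
over `ℝ`; but a product of linear factors either has a real root, which a quadratic of
negative discriminant does not, or is constant.
-/

open MvPolynomial

/-- The discriminant of `f` with respect to `u`, as an element of `ℝ[m,v]`
(variable `0` is `m`, variable `1` is `v`):
`(3m² − 7mv − 2v²)² − 4(2m − 2v)(m³ + 3m²v + 2mv²)`. -/
noncomputable def discF : MvPolynomial (Fin 2) ℝ :=
  (3 * X 0 ^ 2 - 7 * X 0 * X 1 - 2 * X 1 ^ 2) ^ 2
    - 4 * (2 * X 0 - 2 * X 1) * (X 0 ^ 3 + 3 * X 0 ^ 2 * X 1 + 2 * X 0 * X 1 ^ 2)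

/-- `f(m,u,v)` as an element of `ℝ[m,u,v]` (variable `0` is `m`, `1` is `u`, `2` is `v`). -/
noncomputable def fMv : MvPolynomial (Fin 3) ℝ :=
  (2 * X 0 - 2 * X 2) * X 1 ^ 2
    + (3 * X 0 ^ 2 - 7 * X 0 * X 2 - 2 * X 2 ^ 2) * X 1
    + (X 0 ^ 3 + 3 * X 0 ^ 2 * X 2 + 2 * X 0 * X 2 ^ 2)

/-- The inclusion `ℝ[m,v] → ℝ[m,u,v]` sending `m ↦ m`, `v ↦ v`. -/
noncomputable def inclMV : MvPolynomial (Fin 2) ℝ →ₐ[ℝ] MvPolynomial (Fin 3) ℝ :=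
  rename ![0, 2]

theorem MvPolynomial.sq_ne_of_eval_neg {σ R : Type*} [CommRing R] [LinearOrder R]
    [IsStrictOrderedRing R] {p : MvPolynomial σ R} {x : σ → R} (hp : eval x p < 0)
    (h : MvPolynomial σ R) : h ^ 2 ≠ p := by
  rintro rfl
  exact (sq_nonneg (eval x h)).not_gt (by simpa using hp)

theorem linear_mul_linear_mul_ne_quadratic {K : Type*} [Field K] [NeZero (2 : K)]
    {a b c : K} (ha : a ≠ 0) (hd : ∀ s : K, discrim a b c ≠ s ^ 2) (a₁ b₁ a₂ b₂ e : K) :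
    ¬ ∀ x, (a₁ * x + b₁) * (a₂ * x + b₂) * e = a * (x * x) + b * x + c := by
  intro h
  have root_of_ne_zero {α β : K} (hα : α ≠ 0) : α * (-β / α) + β = 0 := by
    rw [mul_div_cancel₀ _ hα, neg_add_cancel]
  obtain rfl | h₁ := eq_or_ne a₁ 0
  · obtain rfl | h₂ := eq_or_ne a₂ 0
    · -- the left side is constant, so the values at `0` and `±1` force `2a = 0`
      have h₀ := h 0
      have h_one := h 1
      have h_neg := h (-1)
      refine ha (mul_right_injective₀ (two_ne_zero (α := K)) ?_)
      linear_combination 2 * h₀ - h_neg - h_one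
    · refine quadratic_ne_zero_of_discrim_ne_sq hd (-b₂ / a₂) ?_
      rw [← h, root_of_ne_zero h₂, mul_zero, zero_mul]
  · refine quadratic_ne_zero_of_discrim_ne_sq hd (-b₁ / a₁) ?_
    rw [← h, root_of_ne_zero h₁, zero_mul, zero_mul]

theorem eval_discF (m v : ℝ) :
    eval ![m, v] discF = discrim (2 * m - 2 * v) (3 * m ^ 2 - 7 * m * v - 2 * v ^ 2)
      (m ^ 3 + 3 * m ^ 2 * v + 2 * m * v ^ 2) := by
  simp [discF, discrim]

theorem eval_fMv (m u v : ℝ) :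
    eval ![m, u, v] fMv = (2 * m - 2 * v) * (u * u) + (3 * m ^ 2 - 7 * m * v - 2 * v ^ 2) * u
      + (m ^ 3 + 3 * m ^ 2 * v + 2 * m * v ^ 2) := by
  simp only [fMv, map_add, map_mul, map_sub, map_pow, map_ofNat, eval_X, Matrix.cons_val_zero,
    Matrix.cons_val_one, Matrix.cons_val_two, Matrix.head_cons, Matrix.tail_cons]
  ring

theorem eval_inclMV (m u v : ℝ) (p : MvPolynomial (Fin 2) ℝ) :
    eval ![m, u, v] (inclMV p) = eval ![m, v] p := by
  have : ![m, u, v] ∘ ![0, 2] = ![m, v] := by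
    funext i; fin_cases i <;> rfl
  rw [inclMV, eval_rename, this]

/-- The discriminant of `f` with respect to `u` is not the square of
any real polynomial in `m` and `v`; consequently `f` admits no factorization of the
form `f = (a₁(m,v)u + b₁(m,v))(a₂(m,v)u + b₂(m,v))·c(m,v)` with
`a₁, a₂, b₁, b₂, c ∈ ℝ[m,v]`. -/
theorem discriminant_not_square_and_no_split :
    (¬ ∃ h : MvPolynomial (Fin 2) ℝ, h ^ 2 = discF) ∧
    (¬ ∃ a₁ b₁ a₂ b₂ c : MvPolynomial (Fin 2) ℝ,
      fMv = (inclMV a₁ * X 1 + inclMV b₁) * (inclMV a₂ * X 1 + inclMV b₂)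
              * inclMV c) := by
  have hdisc : discrim (2 : ℝ) (-4) 24 < 0 := by norm_num [discrim]
  have h_eval : eval ![2, 1] discF = discrim (2 : ℝ) (-4) 24 := by
    rw [eval_discF]; norm_num
  refine ⟨fun ⟨h, hh⟩ ↦ sq_ne_of_eval_neg (h_eval ▸ hdisc) h hh,
    fun ⟨a₁, b₁, a₂, b₂, c, hf⟩ ↦ ?_⟩
  refine linear_mul_linear_mul_ne_quadratic two_ne_zero
    (fun s ↦ (hdisc.trans_le (sq_nonneg s)).ne) (eval ![2, 1] a₁) (eval ![2, 1] b₁)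
    (eval ![2, 1] a₂) (eval ![2, 1] b₂) (eval ![2, 1] c) fun u ↦ ?_
  have hu := congrArg (eval ![2, u, 1]) hf
  simp only [eval_fMv, map_mul, map_add, eval_inclMV, eval_X, Matrix.cons_val_one,
    Matrix.cons_val_zero] at hu
  linear_combination -hu
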